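/- arXiv:2206.00115 — 7 statements merged into one kernel-verified Lean document; each statement's English description precedes it below -/
import Mathlib

section
/- For every natural number p ≥ 1 and every natural number n, F_n - n^p = ∑_{i=1}^{n} ( i^p - 2·∑_{j=0}^{⌊p/2⌋} C(p, 2j+1)·i^{p-2j-1} ) · F_{n-i}, as an identity of integers. -/
/-!
For any `f` with `f 0 = 0`, both `f 1 * F_n - f n` and the convolution
`∑_{i=1}^n (f (i-1) + f i - f (i+1)) F_{n-i}` vanish at `n = 0, 1` and obey
`a (n+2) = a (n+1) + a n + (f n + f (n+1) - f (n+2))`, so they agree. For `f i = i^p` the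
coefficient is `i^p - ((i+1)^p - (i-1)^p)`, and in the binomial expansion of
`(i+1)^p - (i-1)^p` the even-index terms cancel while the odd-index ones double.
-/

open Finset

theorem Finset.sum_range_two_mul {M : Type*} [AddCommMonoid M] (f : ℕ → M) (n : ℕ) :
    ∑ m ∈ range (2 * n), f m = ∑ j ∈ range n, (f (2 * j) + f (2 * j + 1)) := by
  induction n with
  | zero => simp
  | succ n ih => rw [mul_add, mul_one, sum_range_succ, sum_range_succ, sum_range_succ, ih, add_assoc]

theorem add_one_pow_sub_sub_one_pow {R : Type*} [CommRing R] (x : R) (p : ℕ) :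
    (x + 1) ^ p - (x - 1) ^ p =
      2 * ∑ j ∈ range (p / 2 + 1), (p.choose (2 * j + 1) : R) * x ^ (p - (2 * j + 1)) := by
  set t : ℕ → R := fun m => (1 - (-1) ^ m) * (p.choose m * x ^ (p - m))
  have hexpand : (x + 1) ^ p - (x - 1) ^ p = ∑ m ∈ range (p + 1), t m := by
    rw [add_comm x, sub_eq_add_neg x, add_comm x, add_pow, add_pow, ← sum_sub_distrib]
    refine sum_congr rfl fun m _ => ?_
    simp only [t, one_pow]
    ring
  have hextend : ∑ m ∈ range (p + 1), t m = ∑ m ∈ range (2 * (p / 2 + 1)), t m := by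
    refine sum_subset (range_subset_range.2 (by omega)) fun m _ hm => ?_
    rw [mem_range, not_lt] at hm
    simp [t, Nat.choose_eq_zero_of_lt (Nat.lt_of_succ_le hm)]
  rw [hexpand, hextend, sum_range_two_mul, mul_sum]
  refine sum_congr rfl fun j _ => ?_
  simp only [t, pow_succ, pow_mul]
  ring

section Convolution

variable {R : Type*} [CommRing R]

theorem sum_Icc_mul_fib_sub_add_two (g : ℕ → R) (n : ℕ) :
    ∑ i ∈ Icc 1 (n + 2), g i * Nat.fib (n + 2 - i) =
      ∑ i ∈ Icc 1 (n + 1), g i * Nat.fib (n + 1 - i) + ∑ i ∈ Icc 1 n, g i * Nat.fib (n - i)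
        + g (n + 1) := by
  rw [sum_Icc_succ_top (by omega), sum_Icc_succ_top (by omega), sum_Icc_succ_top (by omega)]
  have hfib : ∀ i ∈ Icc 1 n, (Nat.fib (n + 2 - i) : R) = Nat.fib (n + 1 - i) + Nat.fib (n - i) := by
    intro i hi
    rw [mem_Icc] at hi
    rw [show n + 2 - i = n - i + 2 by omega, show n + 1 - i = n - i + 1 by omega, Nat.fib_add_two,
      Nat.cast_add, add_comm]
  rw [sum_congr rfl fun i hi => by rw [hfib i hi]]
  simp [mul_add, sum_add_distrib]

theorem fib_mul_sub_eq_sum_Icc (f : ℕ → R) (hf : f 0 = 0) (n : ℕ) :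
    f 1 * Nat.fib n - f n = ∑ i ∈ Icc 1 n, (f (i - 1) + f i - f (i + 1)) * Nat.fib (n - i) := by
  induction n using Nat.twoStepInduction with
  | zero => simp [hf]
  | one => simp
  | more n ih₀ ih₁ =>
    rw [sum_Icc_mul_fib_sub_add_two, ← ih₀, ← ih₁, Nat.fib_add_two, Nat.add_sub_cancel]
    push_cast
    ring

end Convolution

/-- For every `p ≥ 1` and every `n : ℕ`,
`F_n - n^p = ∑_{i=1}^{n} ( i^p - 2·∑_{j=0}^{⌊p/2⌋} C(p,2j+1)·i^(p-2j-1) ) · F_{n-i}`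
as an identity of integers. -/
theorem fib_sub_pow_eq_sum (p : ℕ) (hp : 1 ≤ p) (n : ℕ) :
    (Nat.fib n : ℤ) - (n : ℤ) ^ p =
      ∑ i ∈ Finset.Icc 1 n,
        ((i : ℤ) ^ p - 2 * ∑ j ∈ Finset.range (p / 2 + 1),
            (p.choose (2 * j + 1) : ℤ) * (i : ℤ) ^ (p - (2 * j + 1)))
          * (Nat.fib (n - i) : ℤ) := by
  have h := fib_mul_sub_eq_sum_Icc (fun i : ℕ => (i : ℤ) ^ p) (zero_pow (by omega)) n
  simp only [Nat.cast_one, one_pow, one_mul] at h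
  rw [h]
  refine sum_congr rfl fun i hi => ?_
  rw [← add_one_pow_sub_sub_one_pow, Nat.cast_pred (mem_Icc.1 hi).1]
  push_cast
  ring
end

section
/- For every natural number p and every natural number n, 𝒞_n^{(p)} = A_p·F_n + B_p·F_{n+1} - ∑_{k=0}^{p} C(p,k)·B_k·n^{p-k}, as an identity of integers. -/
/-- The convolution `𝒞_n^{(p)} = ∑_{i=0}^{n} i^p · F_{n-i}`, with the convention
`0^0 = 1` (which is the convention of `(0 : ℤ) ^ 0` in Lean). -/
def fibConv (n p : ℕ) : ℤ :=
  ∑ i ∈ Finset.range (n + 1), (i : ℤ) ^ p * (Nat.fib (n - i) : ℤ)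

/-- The sequence `A` with `A_0 = 1` and
`A_p = (-1)^p + 2·∑_{j=0}^{⌊p/2⌋} C(p,2j+1)·A_{p-2j-1}` for `p > 0`. -/
def A : ℕ → ℤ
  | 0 => 1
  | p + 1 => (-1) ^ (p + 1) + 2 * ∑ j ∈ Finset.range ((p + 1) / 2 + 1),
      (((p + 1).choose (2 * j + 1) : ℤ)) * A (p - 2 * j)
  decreasing_by exact Nat.lt_succ_of_le (Nat.sub_le p (2 * j))

/-- The sequence `B` with `B_0 = 1` and
`B_p = 2·∑_{j=0}^{⌊p/2⌋} C(p,2j+1)·B_{p-2j-1}` for `p > 0`. -/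
def B : ℕ → ℤ
  | 0 => 1
  | p + 1 => 2 * ∑ j ∈ Finset.range ((p + 1) / 2 + 1),
      (((p + 1).choose (2 * j + 1) : ℤ)) * B (p - 2 * j)
  decreasing_by exact Nat.lt_succ_of_le (Nat.sub_le p (2 * j))

/-!
Let `G(x) = ∑_k C(p,k) B_k x^(p-k)`. Reading `B_k` as the value at `X^k` of a linear functional on
`ℤ[X]` (umbral evaluation), `G(x)` is its value at `(X + x)^p`, so such binomial shifts compose
additively. The recursion of `B` says that the functional sends `q(X+1) - q(X-1)` to `q - q(0)`,
which at `q = (X + x)^p` gives `G(x+1) = G(x) + G(x-1) - x^p`; the recursion of `A` then forces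
`A_p = G(-1)`. As `𝒞_{n+2} = 𝒞_{n+1} + 𝒞_n + (n+1)^p`, the sequence `𝒞_n + G(n)` satisfies the
Fibonacci recurrence, with initial values `B_p` and `A_p + B_p`.
-/

open Finset Polynomial

section Semiring

variable {R : Type*} [CommSemiring R]

def binomShift (c : R) (b : ℕ → R) (p : ℕ) : R :=
  ∑ k ∈ range (p + 1), (p.choose k : R) * b k * c ^ (p - k)

def umbralEval (b : ℕ → R) : R[X] →ₗ[R] R :=
  lsum fun k => LinearMap.mulRight R (b k)

@[simp]
lemma umbralEval_monomial (b : ℕ → R) (k : ℕ) (a : R) :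
    umbralEval b (monomial k a) = a * b k := by
  simp [umbralEval]

@[simp]
lemma umbralEval_X_pow (b : ℕ → R) (k : ℕ) : umbralEval b (X ^ k) = b k := by
  simp [← monomial_one_right_eq_X_pow]

lemma umbralEval_add_C_pow (b : ℕ → R) (q : R[X]) (c : R) (p : ℕ) :
    umbralEval b ((q + C c) ^ p) = binomShift c (fun k => umbralEval b (q ^ k)) p := by
  rw [add_pow, map_sum, binomShift]
  refine sum_congr rfl fun k _ => ?_
  rw [show q ^ k * C c ^ (p - k) * (p.choose k : R[X]) = ((p.choose k : R) * c ^ (p - k)) • q ^ k by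
    rw [smul_eq_C_mul, C_mul, C_pow, map_natCast]; ring, map_smul, smul_eq_mul]
  ring

lemma umbralEval_X_add_C_pow (b : ℕ → R) (c : R) (p : ℕ) :
    umbralEval b ((X + C c) ^ p) = binomShift c b p := by
  simp [umbralEval_add_C_pow]

lemma binomShift_zero (b : ℕ → R) (p : ℕ) : binomShift 0 b p = b p := by
  simp [← umbralEval_X_add_C_pow]

lemma binomShift_binomShift (b : ℕ → R) (c d : R) (p : ℕ) :
    binomShift c (binomShift d b) p = binomShift (d + c) b p := by
  rw [← umbralEval_X_add_C_pow b (d + c), C_add, ← add_assoc, umbralEval_add_C_pow]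
  simp only [umbralEval_X_add_C_pow]

end Semiring

section Ring

variable {R : Type*} [CommRing R]

lemma binomShift_one_sub_binomShift_neg_one (b : ℕ → R) (p : ℕ) :
    binomShift 1 b p - binomShift (-1) b p
      = ∑ k ∈ range p, (p.choose k : R) * b k * (1 - (-1) ^ (p - k)) := by
  simp only [binomShift, sum_range_succ, Nat.sub_self, pow_zero, add_sub_add_right_eq_sub,
    ← sum_sub_distrib, ← mul_sub, one_pow]

lemma two_mul_sum_choose_odd (b : ℕ → R) (p : ℕ) :
    2 * ∑ j ∈ range ((p + 1) / 2 + 1), ((p + 1).choose (2 * j + 1) : R) * b (p - 2 * j)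
      = binomShift 1 b (p + 1) - binomShift (-1) b (p + 1) := by
  rw [binomShift_one_sub_binomShift_neg_one, mul_sum]
  -- Reindex by `k = p - 2j`. For odd `p` the last `j` is sent to `k = 0` by truncated
  -- subtraction; both of the terms involved vanish.
  refine sum_of_injOn (fun j => p - 2 * j) ?_ ?_ ?_ ?_
  · intro i hi j hj h
    simp only [coe_range, Set.mem_Iio] at hi hj
    simp only at h
    omega
  · intro j hj
    simp only [coe_range, Set.mem_Iio] at hj ⊢
    omega
  · intro k hk hk'
    have heven : Even (p + 1 - k) := by
      rw [Nat.even_iff]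
      by_contra hodd
      refine hk' ⟨(p - k) / 2, ?_, ?_⟩ <;> simp only [coe_range, Set.mem_Iio, mem_range] at hk ⊢ <;> omega
    rw [heven.neg_one_pow, sub_self, mul_zero]
  · intro j hj
    rcases Nat.lt_or_ge p (2 * j) with hp | hp
    · have hj' : p + 1 = 2 * j := by simp only [mem_range] at hj; omega
      simp [Nat.sub_eq_zero_of_le hp.le, hj', (even_two_mul j).neg_one_pow]
    · rw [Nat.choose_symm_of_eq_add (by omega : p + 1 = (p - 2 * j) + (2 * j + 1)),
        show p + 1 - (p - 2 * j) = 2 * j + 1 by omega, (odd_two_mul_add_one j).neg_one_pow]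
      ring

lemma eq_fib_of_add_two {u : ℕ → R} (hu : ∀ n, u (n + 2) = u (n + 1) + u n) (n : ℕ) :
    u n = (u 1 - u 0) * Nat.fib n + u 0 * Nat.fib (n + 1) := by
  induction n using Nat.twoStepInduction with
  | zero => simp
  | one => simp
  | more n ih₀ ih₁ =>
    simp only [hu, ih₀, ih₁, Nat.fib_add_two, Nat.cast_add]
    ring

end Ring

lemma B_eq_zero_pow_add (p : ℕ) : B p = 0 ^ p + (binomShift 1 B p - binomShift (-1) B p) := by
  cases p with
  | zero => simp [B, binomShift]
  | succ p =>
    rw [← two_mul_sum_choose_odd, B]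
    simp

lemma A_eq_neg_one_pow_add (p : ℕ) :
    A p = (-1) ^ p + (binomShift 1 A p - binomShift (-1) A p) := by
  cases p with
  | zero => simp [A, binomShift]
  | succ p => rw [← two_mul_sum_choose_odd, A]

lemma umbralEval_B_comp_sub (q : ℤ[X]) :
    umbralEval B (q.comp (X + 1)) - umbralEval B (q.comp (X - 1))
      = umbralEval B q - q.eval 0 := by
  induction q using Polynomial.induction_on' with
  | add q r hq hr =>
    simp only [add_comp, map_add, eval_add]
    linear_combination hq + hr
  | monomial n a =>
    simp only [← C_mul_X_pow_eq_monomial, ← smul_eq_C_mul, smul_comp, X_pow_comp, map_smul,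
      eval_smul, eval_pow, eval_X, smul_eq_mul, umbralEval_X_pow]
    have hB := B_eq_zero_pow_add n
    rw [← umbralEval_X_add_C_pow, ← umbralEval_X_add_C_pow, C_1, C_neg, C_1,
      ← sub_eq_add_neg] at hB
    linear_combination (-a) * hB

lemma binomShift_B_add_one (x : ℤ) (p : ℕ) :
    binomShift (x + 1) B p = binomShift x B p + binomShift (x - 1) B p - x ^ p := by
  have h := umbralEval_B_comp_sub ((X + C x) ^ p)
  simp only [pow_comp, add_comp, X_comp, C_comp, eval_pow, eval_add, eval_X, eval_C, zero_add] at h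
  simp only [← umbralEval_X_add_C_pow, C_add, C_sub, C_1]
  rw [show X + (C x + 1) = X + 1 + C x by ring, show X + (C x - 1) = X - 1 + C x by ring]
  linear_combination h

lemma A_eq_binomShift_B (p : ℕ) : A p = binomShift (-1) B p := by
  induction p using Nat.strong_induction_on with
  | _ p ih =>
    have hshift : binomShift (-1) B p = (-1) ^ p
        + (binomShift 1 (binomShift (-1) B) p - binomShift (-1) (binomShift (-1) B) p) := by
      rw [binomShift_binomShift, binomShift_binomShift, binomShift_B_add_one (-1), ← sub_eq_add_neg]
      ring
    -- both sides satisfy the recursion of `A`, whose right-hand side only involves indices `< p`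
    rw [A_eq_neg_one_pow_add, hshift, binomShift_one_sub_binomShift_neg_one,
      binomShift_one_sub_binomShift_neg_one]
    congr 1
    exact sum_congr rfl fun k hk => by rw [ih k (mem_range.1 hk)]

lemma fibConv_add_two (n p : ℕ) :
    fibConv (n + 2) p = fibConv (n + 1) p + fibConv n p + ((n : ℤ) + 1) ^ p := by
  have hsplit : ∀ i ∈ range (n + 1), (i : ℤ) ^ p * Nat.fib (n + 2 - i)
      = (i : ℤ) ^ p * Nat.fib (n + 1 - i) + (i : ℤ) ^ p * Nat.fib (n - i) := fun i hi => by
    rw [mem_range] at hi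
    rw [show n + 2 - i = n - i + 2 by omega, show n + 1 - i = n - i + 1 by omega, Nat.fib_add_two]
    push_cast
    ring
  rw [fibConv, fibConv, fibConv, sum_range_succ, sum_range_succ, sum_congr rfl hsplit,
    sum_add_distrib, sum_range_succ (n := n + 1)]
  simp

lemma fibConv_add_binomShift_B_add_two (n p : ℕ) :
    fibConv (n + 2) p + binomShift ((n + 2 : ℕ) : ℤ) B p
      = (fibConv (n + 1) p + binomShift ((n + 1 : ℕ) : ℤ) B p)
        + (fibConv n p + binomShift (n : ℤ) B p) := by
  have h := binomShift_B_add_one ((n : ℤ) + 1) p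
  rw [add_sub_cancel_right, add_assoc, one_add_one_eq_two] at h
  rw [fibConv_add_two]
  push_cast
  rw [h]
  ring

/-- **Theorem 2 of the paper.** For all `p n : ℕ`,
`𝒞_n^{(p)} = A_p·F_n + B_p·F_{n+1} - ∑_{k=0}^{p} C(p,k)·B_k·n^(p-k)`. -/
theorem fibConv_eq (p n : ℕ) :
    fibConv n p =
      A p * (Nat.fib n : ℤ) + B p * (Nat.fib (n + 1) : ℤ)
        - ∑ k ∈ Finset.range (p + 1), (p.choose k : ℤ) * B k * (n : ℤ) ^ (p - k) := by
  have h₀ : fibConv 0 p + binomShift ((0 : ℕ) : ℤ) B p = B p := by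
    simp [fibConv, binomShift_zero]
  have h₁ : fibConv 1 p + binomShift ((1 : ℕ) : ℤ) B p = A p + B p := by
    have h := binomShift_B_add_one 0 p
    rw [zero_add, zero_sub] at h
    simp [fibConv, sum_range_succ, h, A_eq_binomShift_B, binomShift_zero, add_comm]
  have h := eq_fib_of_add_two (u := fun m => fibConv m p + binomShift (m : ℤ) B p)
    (fibConv_add_binomShift_B_add_two · p) n
  simp only [h₀, h₁, add_sub_cancel_right] at h
  rw [← binomShift]
  linear_combination h
end

section
/- For every natural number p and every natural number n, ∑_{i=0}^{n} i^p·F_i = ( ∑_{k=0}^{p} C(p,k)·(-1)^k·A_k·n^{p-k} )·F_n + ( ∑_{k=0}^{p} C(p,k)·(-1)^k·B_k·n^{p-k} )·F_{n+1} - (-1)^p·B_p, where the sum on the left uses the convention 0^0 = 1, and the identity holds in the integers. -/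
open Finset

section BinomialPoly

variable {R : Type*} [CommRing R]

def binomialPoly (c : ℕ → R) (p : ℕ) (x : R) : R :=
  ∑ k ∈ range (p + 1), (p.choose k : R) * c k * x ^ (p - k)

theorem binomialPoly_zero_right (c : ℕ → R) (p : ℕ) : binomialPoly c p 0 = c p := by
  rw [binomialPoly, sum_range_succ, sum_eq_zero fun k hk => ?_]
  · simp
  · rw [zero_pow (Nat.sub_ne_zero_of_lt (mem_range.1 hk)), mul_zero]

theorem binomialPoly_add_coeff (c d : ℕ → R) (p : ℕ) (x : R) :
    binomialPoly (c + d) p x = binomialPoly c p x + binomialPoly d p x := by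
  simp only [binomialPoly, ← sum_add_distrib, Pi.add_apply]
  exact sum_congr rfl fun _ _ => by ring

theorem binomialPoly_single_zero (p : ℕ) (x : R) : binomialPoly (Pi.single 0 1) p x = x ^ p := by
  rw [binomialPoly, sum_range_succ', sum_eq_zero fun k _ => by simp]
  simp

-- `binomialPoly c` is an Appell sequence.
theorem binomialPoly_add (c : ℕ → R) (p : ℕ) (x y : R) :
    binomialPoly c p (x + y) = binomialPoly (fun m => binomialPoly c m y) p x := by
  simp only [binomialPoly, mul_sum, sum_mul, range_eq_Ico]
  rw [← sum_Ico_Ico_comm]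
  refine sum_congr rfl fun k hk => ?_
  have hkp : k ≤ p := Nat.lt_succ_iff.1 (mem_Ico.1 hk).2
  rw [sum_Ico_eq_sum_range, Nat.sub_add_comm hkp, add_comm x, add_pow, mul_sum]
  refine sum_congr rfl fun j _ => ?_
  have hchoose : (p.choose (k + j) : R) * (k + j).choose k = p.choose k * (p - k).choose j := by
    have := Nat.choose_mul (n := p) (Nat.le_add_right k j)
    rw [Nat.add_sub_cancel_left] at this
    rw [← Nat.cast_mul, ← Nat.cast_mul, this]
  rw [Nat.add_sub_cancel_left, Nat.sub_add_eq]
  linear_combination (-c k * y ^ j * x ^ (p - k - j)) * hchoose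

theorem sum_range_two_mul_one_sub_neg_one_pow_mul (f : ℕ → R) (N : ℕ) :
    ∑ i ∈ range (2 * N), (1 - (-1) ^ i) * f i = 2 * ∑ j ∈ range N, f (2 * j + 1) := by
  induction N with
  | zero => simp
  | succ N ih =>
    rw [Nat.mul_succ, sum_range_succ, sum_range_succ, ih, sum_range_succ, pow_succ, pow_mul]
    simp only [neg_one_sq, one_pow]
    ring

theorem binomialPoly_one_sub_binomialPoly_neg_one (h : ℕ → R) (q : ℕ) :
    binomialPoly h (q + 1) 1 - binomialPoly h (q + 1) (-1) =
      2 * ∑ j ∈ range ((q + 1) / 2 + 1), ((q + 1).choose (2 * j + 1) : R) * h (q - 2 * j) := by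
  have hreflect : binomialPoly h (q + 1) 1 - binomialPoly h (q + 1) (-1) =
      ∑ i ∈ range (q + 2), (1 - (-1) ^ i) * (((q + 1).choose i : R) * h (q + 1 - i)) := by
    rw [binomialPoly, binomialPoly, ← sum_sub_distrib, ← sum_range_reflect]
    refine sum_congr rfl fun i hi => ?_
    have hiq : i ≤ q + 1 := Nat.lt_succ_iff.1 (mem_range.1 hi)
    rw [Nat.add_sub_cancel, Nat.choose_symm hiq, Nat.sub_sub_self hiq, one_pow]
    ring
  have hextend : range (q + 2) ⊆ range (2 * ((q + 1) / 2 + 1)) := range_subset_range.2 (by omega)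
  rw [hreflect, sum_subset hextend fun i hi hi' => ?_, sum_range_two_mul_one_sub_neg_one_pow_mul]
  · simp only [Nat.add_sub_add_right]
  · rw [Nat.choose_eq_zero_of_lt (by simp at hi'; omega), Nat.cast_zero, zero_mul, mul_zero]

theorem sum_choose_mul_neg_one_pow (c : ℕ → R) (p : ℕ) (x : R) :
    ∑ k ∈ range (p + 1), (p.choose k : R) * (-1) ^ k * c k * x ^ (p - k) =
      (-1) ^ p * binomialPoly c p (-x) := by
  rw [binomialPoly, mul_sum]
  refine sum_congr rfl fun k hk => ?_
  have hsplit : (-1 : R) ^ p = (-1) ^ k * (-1) ^ (p - k) := by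
    rw [← pow_add, Nat.add_sub_cancel' (Nat.lt_succ_iff.1 (mem_range.1 hk))]
  have hsq : ((-1 : R) ^ (p - k)) ^ 2 = 1 := by rw [← pow_mul, pow_mul']; simp
  rw [neg_pow x, hsplit]
  linear_combination (-(p.choose k : R) * (-1) ^ k * c k * x ^ (p - k)) * hsq

end BinomialPoly

theorem sum_mul_fib_eq {R : Type*} [CommRing R] (g u : ℕ → R)
    (hu : ∀ n, u (n + 2) + u (n + 1) = u n + g (n + 1)) (n : ℕ) :
    ∑ i ∈ range (n + 1), g i * Nat.fib i = u (n + 1) * Nat.fib n + u n * Nat.fib (n + 1) - u 0 := by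
  induction n with
  | zero => simp
  | succ n ih =>
    rw [sum_range_succ, ih, Nat.fib_add_two]
    push_cast
    linear_combination (-(Nat.fib (n + 1) : R)) * hu n

theorem B_succ (q : ℕ) : B (q + 1) = binomialPoly B (q + 1) 1 - binomialPoly B (q + 1) (-1) := by
  rw [binomialPoly_one_sub_binomialPoly_neg_one, B]

theorem binomialPoly_B_add_one_add_pow (p : ℕ) (x : ℤ) :
    binomialPoly B p (x + 1) + x ^ p = binomialPoly B p x + binomialPoly B p (x - 1) := by
  have hcoeff : (fun m => binomialPoly B m 1) + Pi.single 0 1 =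
      (fun m => binomialPoly B m 0) + fun m => binomialPoly B m (-1) := by
    funext m
    cases m with
    | zero => simp [binomialPoly, B]
    | succ q => simp [binomialPoly_zero_right, B_succ q]
  rw [← binomialPoly_single_zero, binomialPoly_add, ← binomialPoly_add_coeff, hcoeff,
    binomialPoly_add_coeff, ← binomialPoly_add, ← binomialPoly_add, add_zero, sub_eq_add_neg]

theorem A_eq_binomialPoly_B (m : ℕ) : A m = binomialPoly B m (-1) := by
  induction m using Nat.strong_induction_on with
  | _ m ih =>
    cases m with
    | zero => simp [A, B, binomialPoly]
    | succ q =>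
      have hA : ∀ j ∈ range ((q + 1) / 2 + 1), ((q + 1).choose (2 * j + 1) : ℤ) * A (q - 2 * j) =
          (q + 1).choose (2 * j + 1) * binomialPoly B (q - 2 * j) (-1) :=
        fun j _ => by rw [ih (q - 2 * j) (by omega)]
      rw [A, sum_congr rfl hA,
        ← binomialPoly_one_sub_binomialPoly_neg_one fun k => binomialPoly B k (-1),
        ← binomialPoly_add, ← binomialPoly_add]
      have hdiff := binomialPoly_B_add_one_add_pow (q + 1) (-1)
      norm_num at hdiff ⊢
      linear_combination hdiff

theorem binomialPoly_A (p : ℕ) (x : ℤ) : binomialPoly A p x = binomialPoly B p (x - 1) := by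
  rw [sub_eq_add_neg, binomialPoly_add, ← funext A_eq_binomialPoly_B]

/-- **Theorem 3 of the paper, the Brousseau sums.** For all `p n : ℕ`,
`∑_{i=0}^{n} i^p·F_i = (∑_{k=0}^{p} C(p,k)·(-1)^k·A_k·n^(p-k))·F_n
  + (∑_{k=0}^{p} C(p,k)·(-1)^k·B_k·n^(p-k))·F_{n+1} - (-1)^p·B_p`,
where the left-hand sum uses the convention `0^0 = 1` (as `(0 : ℤ) ^ 0` in Lean). -/
theorem brousseau_sum_eq (p n : ℕ) :
    ∑ i ∈ Finset.range (n + 1), (i : ℤ) ^ p * (Nat.fib i : ℤ) =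
      (∑ k ∈ Finset.range (p + 1), (p.choose k : ℤ) * (-1) ^ k * A k * (n : ℤ) ^ (p - k))
          * (Nat.fib n : ℤ)
        + (∑ k ∈ Finset.range (p + 1), (p.choose k : ℤ) * (-1) ^ k * B k * (n : ℤ) ^ (p - k))
          * (Nat.fib (n + 1) : ℤ)
        - (-1) ^ p * B p := by
  set u : ℕ → ℤ := fun m => (-1) ^ p * binomialPoly B p (-m) with hu
  have hrec : ∀ m : ℕ, u (m + 2) + u (m + 1) = u m + ((m + 1 : ℕ) : ℤ) ^ p := by
    intro m
    have hB := binomialPoly_B_add_one_add_pow p (-(m + 1))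
    rw [show -((m : ℤ) + 1) + 1 = -m by ring, show -((m : ℤ) + 1) - 1 = -(m + 2) by ring,
      neg_pow] at hB
    have hsq : ((-1 : ℤ) ^ p) ^ 2 = 1 := by rw [← pow_mul, pow_mul']; simp
    simp only [hu]
    push_cast
    linear_combination (-(-1) ^ p) * hB + ((m : ℤ) + 1) ^ p * hsq
  rw [sum_mul_fib_eq (fun i : ℕ => (i : ℤ) ^ p) u hrec, sum_choose_mul_neg_one_pow,
    sum_choose_mul_neg_one_pow, binomialPoly_A,
    show -(n : ℤ) - 1 = -((n + 1 : ℕ) : ℤ) by push_cast; ring]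
  simp only [hu, Nat.cast_zero, neg_zero, binomialPoly_zero_right]
end

section
/- For every natural number n ≥ 1, ∑_{i=1}^{n} i^3·F_i = (n^3 + 6n - 12)·F_{n+2} + (-3n^2 + 9n - 19)·F_{n+3} + 50, as an identity of integers. -/
/-!
Both sides vanish at `n = 0`, and the right-hand side increases from `n` to `n + 1` by
`(n + 1)^3 F_{n+1}`: after eliminating `F_{n+4} = F_{n+3} + F_{n+2}` and
`F_{n+1} = F_{n+3} - F_{n+2}` this is a polynomial identity in `n`, `F_{n+2}`, `F_{n+3}`.
-/

theorem Finset.sum_Icc_one_eq_of_sub_eq {M : Type*} [AddCommGroup M] (f g : ℕ → M)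
    (h₀ : g 0 = 0) (hstep : ∀ n, g (n + 1) - g n = f (n + 1)) (n : ℕ) :
    ∑ i ∈ Finset.Icc 1 n, f i = g n := by
  induction n with
  | zero => simp [h₀]
  | succ n ih => rw [Finset.sum_Icc_succ_top (by omega), ih, ← hstep, add_sub_cancel]

namespace ErbacherFuchs

def rhs (n : ℕ) : ℤ :=
  ((n : ℤ) ^ 3 + 6 * (n : ℤ) - 12) * (Nat.fib (n + 2) : ℤ)
    + (-3 * (n : ℤ) ^ 2 + 9 * (n : ℤ) - 19) * (Nat.fib (n + 3) : ℤ) + 50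

theorem rhs_zero : rhs 0 = 0 := by
  simp [rhs, Nat.fib_add_two]

theorem rhs_succ_sub (n : ℕ) :
    rhs (n + 1) - rhs n = ((n + 1 : ℕ) : ℤ) ^ 3 * (Nat.fib (n + 1) : ℤ) := by
  have fib_four : (Nat.fib (n + 4) : ℤ) = Nat.fib (n + 3) + Nat.fib (n + 2) := by
    rw [Nat.fib_add_two (n := n + 2)]; push_cast; ring
  have fib_one : (Nat.fib (n + 1) : ℤ) = Nat.fib (n + 3) - Nat.fib (n + 2) := by
    rw [Nat.fib_add_two (n := n + 1)]; push_cast; ring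
  simp only [rhs, show n + 1 + 2 = n + 3 from rfl, show n + 1 + 3 = n + 4 from rfl]
  rw [fib_four, fib_one]
  push_cast
  ring

end ErbacherFuchs

theorem erbacher_fuchs_general (n : ℕ) :
    ∑ i ∈ Finset.Icc 1 n, (i : ℤ) ^ 3 * (Nat.fib i : ℤ) =
      ((n : ℤ) ^ 3 + 6 * (n : ℤ) - 12) * (Nat.fib (n + 2) : ℤ)
        + (-3 * (n : ℤ) ^ 2 + 9 * (n : ℤ) - 19) * (Nat.fib (n + 3) : ℤ) + 50 :=
  Finset.sum_Icc_one_eq_of_sub_eq _ ErbacherFuchs.rhs ErbacherFuchs.rhs_zero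
    ErbacherFuchs.rhs_succ_sub n

/-- **Erbacher–Fuchs.** For every `n ≥ 1`,
`∑_{i=1}^{n} i^3·F_i = (n^3+6n-12)·F_{n+2} + (-3n^2+9n-19)·F_{n+3} + 50`. -/
theorem erbacher_fuchs (n : ℕ) (hn : 1 ≤ n) :
    ∑ i ∈ Finset.Icc 1 n, (i : ℤ) ^ 3 * (Nat.fib i : ℤ) =
      ((n : ℤ) ^ 3 + 6 * (n : ℤ) - 12) * (Nat.fib (n + 2) : ℤ)
        + (-3 * (n : ℤ) ^ 2 + 9 * (n : ℤ) - 19) * (Nat.fib (n + 3) : ℤ) + 50 :=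
  erbacher_fuchs_general n
end

section
/- For every natural number n ≥ 1, ∑_{i=1}^{n} i^3·F_i = (n^3 - 3n^2 + 15n - 31)·F_n + (n^3 - 6n^2 + 24n - 50)·F_{n+1} + 50, as an identity of integers. -/
theorem ledin_cubic_sum_general (n : ℕ) :
    ∑ i ∈ Finset.Icc 1 n, (i : ℤ) ^ 3 * (Nat.fib i : ℤ) =
      ((n : ℤ) ^ 3 - 3 * (n : ℤ) ^ 2 + 15 * (n : ℤ) - 31) * (Nat.fib n : ℤ)
        + ((n : ℤ) ^ 3 - 6 * (n : ℤ) ^ 2 + 24 * (n : ℤ) - 50) * (Nat.fib (n + 1) : ℤ)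
        + 50 := by
  induction n with
  | zero => simp
  | succ m ih =>
    rw [Finset.sum_Icc_succ_top (Nat.le_add_left 1 m), ih, Nat.fib_add_two]
    push_cast
    ring

/-- **Ledin's form of the Erbacher–Fuchs identity.** For every `n ≥ 1`,
`∑_{i=1}^{n} i^3·F_i = (n^3-3n^2+15n-31)·F_n + (n^3-6n^2+24n-50)·F_{n+1} + 50`. -/
theorem ledin_cubic_sum (n : ℕ) (hn : 1 ≤ n) :
    ∑ i ∈ Finset.Icc 1 n, (i : ℤ) ^ 3 * (Nat.fib i : ℤ) =
      ((n : ℤ) ^ 3 - 3 * (n : ℤ) ^ 2 + 15 * (n : ℤ) - 31) * (Nat.fib n : ℤ)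
        + ((n : ℤ) ^ 3 - 6 * (n : ℤ) ^ 2 + 24 * (n : ℤ) - 50) * (Nat.fib (n + 1) : ℤ)
        + 50 :=
  ledin_cubic_sum_general n
end

section
/- For every natural number n, P_n - n^3 = 2·∑_{i=1}^{n} ( i^3 - 3i^2 - 1 )·P_{n-i}, as an identity of integers, where P_n denotes the Pell numbers. -/
/-- The Pell numbers: `P_0 = 0`, `P_1 = 1`, and `P_n = 2·P_{n-1} + P_{n-2}` for `n > 1`. -/
def pell : ℕ → ℤ
  | 0 => 0
  | 1 => 1
  | n + 2 => 2 * pell (n + 1) + pell n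

/-!
Both sides are determined by their values at `0` and `1` together with their defect
`u (n + 2) - 2 u (n + 1) - u n` against the Pell recurrence. For `P_n - n^3` the defect is minus the
second-order difference `(n+2)^3 - 2(n+1)^3 - n^3`, while convolving any sequence `a` with the Pell
numbers gives a sequence of defect `a (n + 1)`, because `P_0 = 0` and `P_1 = 1`. With
`a i = 2 (i^3 - 3 i^2 - 1)` the two defects agree.
-/

theorem pell_add_two (n : ℕ) : pell (n + 2) = 2 * pell (n + 1) + pell n := rfl

def pellDefect (u : ℕ → ℤ) (n : ℕ) : ℤ := u (n + 2) - 2 * u (n + 1) - u n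

theorem eq_of_pellDefect_eq {u v : ℕ → ℤ} (h₀ : u 0 = v 0) (h₁ : u 1 = v 1)
    (h : pellDefect u = pellDefect v) : u = v := by
  funext n
  induction n using Nat.twoStepInduction with
  | zero => exact h₀
  | one => exact h₁
  | more n ih₀ ih₁ =>
    have := congrFun h n
    rw [pellDefect, pellDefect, ih₀, ih₁] at this
    exact sub_left_injective (sub_left_injective this)

theorem pellDefect_sum_Icc_mul_pell (a : ℕ → ℤ) (n : ℕ) :
    pellDefect (fun m ↦ ∑ i ∈ Finset.Icc 1 m, a i * pell (m - i)) n = a (n + 1) := by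
  have recurrence : ∑ i ∈ Finset.Icc 1 n, a i * pell (n + 2 - i) =
      2 * ∑ i ∈ Finset.Icc 1 n, a i * pell (n + 1 - i) +
        ∑ i ∈ Finset.Icc 1 n, a i * pell (n - i) := by
    rw [Finset.mul_sum, ← Finset.sum_add_distrib]
    refine Finset.sum_congr rfl fun i hi ↦ ?_
    have hin : i ≤ n := (Finset.mem_Icc.mp hi).2
    rw [show n + 2 - i = n - i + 2 by omega, show n + 1 - i = n - i + 1 by omega, pell_add_two]
    ring
  simp only [pellDefect]
  rw [Finset.sum_Icc_succ_top (by omega), Finset.sum_Icc_succ_top (by omega),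
    Finset.sum_Icc_succ_top (by omega), recurrence, Nat.sub_self, Nat.sub_self,
    show n + 2 - (n + 1) = 1 by omega]
  simp only [pell]
  ring

/-- For every `n : ℕ`,
`P_n - n^3 = 2·∑_{i=1}^{n} (i^3 - 3i^2 - 1)·P_{n-i}`. -/
theorem pell_sub_cube_eq_sum (n : ℕ) :
    pell n - (n : ℤ) ^ 3 =
      2 * ∑ i ∈ Finset.Icc 1 n,
        ((i : ℤ) ^ 3 - 3 * (i : ℤ) ^ 2 - 1) * pell (n - i) := by
  let a : ℕ → ℤ := fun i ↦ (i : ℤ) ^ 3 - 3 * (i : ℤ) ^ 2 - 1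
  suffices h : (fun m ↦ pell m - (m : ℤ) ^ 3) =
      fun m ↦ 2 * ∑ i ∈ Finset.Icc 1 m, a i * pell (m - i) from congrFun h n
  refine eq_of_pellDefect_eq (by simp [pell]) (by simp [pell]) (funext fun m ↦ ?_)
  have convolution := pellDefect_sum_Icc_mul_pell a m
  simp only [pellDefect, a] at convolution ⊢
  push_cast at convolution ⊢
  linear_combination pell_add_two m - 2 * convolution
end

section
/- Let a and b be integers and define the sequence R by R_0 = 0, R_1 = 1, and R_n = a·R_{n-1} + b·R_{n-2} for n > 1. Then for every natural number n, R_n - n^3 = ∑_{i=1}^{n} ( (a+b-1)·i^3 - 3(b+1)·i^2 + 3(b-1)·i - (b+1) )·R_{n-i}, as an identity of integers. -/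
/-! With `c_m = a·m³ + b·(m-1)³ - (m+1)³`, which expands to the coefficient in the statement, both
`R_n - n³` and the convolution `∑_{i=1}^n c_i R_{n-i}` vanish at `n = 0, 1` and satisfy the
inhomogeneous recurrence `X_{n+2} = a X_{n+1} + b X_n + c_{n+1}`; hence they agree. -/

section LinearRecurrence

variable {a b : ℤ} {R : ℕ → ℤ}

theorem sum_Icc_mul_sub_add_two (hR0 : R 0 = 0) (hR1 : R 1 = 1)
    (hRrec : ∀ n, R (n + 2) = a * R (n + 1) + b * R n) (c : ℕ → ℤ) (n : ℕ) :
    ∑ i ∈ Finset.Icc 1 (n + 2), c i * R (n + 2 - i) =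
      a * ∑ i ∈ Finset.Icc 1 (n + 1), c i * R (n + 1 - i)
        + b * ∑ i ∈ Finset.Icc 1 n, c i * R (n - i) + c (n + 1) := by
  have hstep : ∑ i ∈ Finset.Icc 1 n, c i * R (n + 2 - i) =
      a * ∑ i ∈ Finset.Icc 1 n, c i * R (n + 1 - i) + b * ∑ i ∈ Finset.Icc 1 n, c i * R (n - i) := by
    rw [Finset.mul_sum, Finset.mul_sum, ← Finset.sum_add_distrib]
    refine Finset.sum_congr rfl fun i hi => ?_
    have hi : i ≤ n := (Finset.mem_Icc.mp hi).2
    rw [show n + 2 - i = n - i + 2 by omega, show n + 1 - i = n - i + 1 by omega, hRrec]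
    ring
  rw [Finset.sum_Icc_succ_top (by omega), Finset.sum_Icc_succ_top (by omega),
    Finset.sum_Icc_succ_top (by omega), hstep]
  simp only [Nat.sub_self, show n + 2 - (n + 1) = 1 by omega, hR0, hR1]
  ring

theorem sub_eq_sum_Icc_mul (hR0 : R 0 = 0) (hR1 : R 1 = 1)
    (hRrec : ∀ n, R (n + 2) = a * R (n + 1) + b * R n) {g : ℕ → ℤ} (hg0 : g 0 = 0) (hg1 : g 1 = 1)
    (n : ℕ) :
    R n - g n = ∑ i ∈ Finset.Icc 1 n, (a * g i + b * g (i - 1) - g (i + 1)) * R (n - i) := by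
  induction n using Nat.twoStepInduction with
  | zero => simp [hR0, hg0]
  | one => simp [hR0, hR1, hg1]
  | more n ih ih1 =>
    rw [sum_Icc_mul_sub_add_two hR0 hR1 hRrec, ← ih, ← ih1, hRrec, Nat.add_sub_cancel]
    ring

end LinearRecurrence

/-- For the linear recurrence `R_0 = 0`, `R_1 = 1`,
`R_n = a·R_{n-1} + b·R_{n-2}` for `n > 1` (with `a b : ℤ`), and every `n : ℕ`,
`R_n - n^3 = ∑_{i=1}^{n} ((a+b-1)·i^3 - 3(b+1)·i^2 + 3(b-1)·i - (b+1))·R_{n-i}`. -/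
theorem linear_recurrence_sub_cube_eq_sum (a b : ℤ) (R : ℕ → ℤ)
    (hR0 : R 0 = 0) (hR1 : R 1 = 1)
    (hRrec : ∀ n : ℕ, R (n + 2) = a * R (n + 1) + b * R n) (n : ℕ) :
    R n - (n : ℤ) ^ 3 =
      ∑ i ∈ Finset.Icc 1 n,
        ((a + b - 1) * (i : ℤ) ^ 3 - 3 * (b + 1) * (i : ℤ) ^ 2
          + 3 * (b - 1) * (i : ℤ) - (b + 1)) * R (n - i) := by
  rw [sub_eq_sum_Icc_mul (g := fun k => (k : ℤ) ^ 3) hR0 hR1 hRrec (by simp) (by simp)]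
  refine Finset.sum_congr rfl fun i hi => ?_
  rw [Nat.cast_sub (Finset.mem_Icc.mp hi).1]
  push_cast
  ring
end
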